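/- (a) Let f : ℝ → [0,∞] be lower semicontinuous and convex with f(0) = 1 and D_f ≠ {0}; for each k ≥ 1 and each ε admissible at level k defining A_k(f), the limit lim_{n→∞} (1/n) log ℙ(M_n ∈ A_k(f)) exists in [−∞,0] and equals sup_n (1/n) log ℙ(M_n ∈ A_k(f)); in particular limsup_{n} (1/n) log ℙ(M_n ∈ A_k(f)) = liminf_{n} (1/n) log ℙ(M_n ∈ A_k(f)). (b) If f(0) = 1 and f(θ) = ∞ for all θ ≠ 0, then for each k ≥ 1 the limit lim_{n→∞} (1/n) log ℙ(M_n ∈ V_k(f)) exists in [−∞,0] and equals sup_n (1/n) log ℙ(M_n ∈ V_k(f)). -/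

import Mathlib

open MeasureTheory Filter Metric Set
open scoped ENNReal Classical

noncomputable section

/-- Epigraph of an extended-real-valued function on `ℝ`, as a subset of `ℝ²`
(which carries the box metric `dist p q = max |p₁-q₁| |p₂-q₂|`). -/
def epiE (f : ℝ → EReal) : Set (ℝ × ℝ) := {p | f p.1 ≤ (p.2 : EReal)}

/-- `awGap A B r` is `sup_{x ∈ B̄_r} |dist(x,A) - dist(x,B)|`. -/
def awGap (A B : Set (ℝ × ℝ)) (r : ℝ) : ℝ :=
  sSup ((fun x => |infDist x A - infDist x B|) '' closedBall (0 : ℝ × ℝ) r)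

/-- Attouch–Wets convergence of a sequence of functions, via epigraphs. -/
def AWTendsto (F : ℕ → ℝ → EReal) (f : ℝ → EReal) : Prop :=
  ∀ r : ℝ, 0 < r → Tendsto (fun n => awGap (epiE (F n)) (epiE f) r) atTop (nhds 0)

/-- The basic Attouch–Wets neighbourhood `V_k(f)`. -/
def Vk (k : ℕ) (f : ℝ → EReal) : Set (ℝ → EReal) :=
  {g | awGap (epiE g) (epiE f) (k : ℝ) < 1 / (k : ℝ)}

/-- Convexity for extended-real-valued functions on `ℝ`. -/
def ERConvex (f : ℝ → EReal) : Prop :=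
  ∀ x y a b : ℝ, 0 ≤ a → 0 ≤ b → a + b = 1 →
    f (a * x + b * y) ≤ (a : EReal) * f x + (b : EReal) * f y

/-- Effective domain of an extended-real-valued function. -/
def effDom (f : ℝ → EReal) : Set ℝ := {θ | f θ < ⊤}

/-- The moment generating function of a measure on `ℝ`, with values in `(0,∞]`. -/
def mgfE (ν : Measure ℝ) : ℝ → EReal :=
  fun θ => ((∫⁻ x, ENNReal.ofReal (Real.exp (θ * x)) ∂ν : ℝ≥0∞) : EReal)

/-- `log` of a probability, with the convention `log 0 = -∞`. -/
def elog (p : ℝ≥0∞) : EReal := if p = 0 then ⊥ else ((Real.log p.toReal : ℝ) : EReal)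

/-- The empirical moment generating function estimator
`M_n(θ) = (1/n) ∑_{i<n} exp (θ X_i)`. -/
def Mn {Ω : Type*} (X : ℕ → Ω → ℝ) (n : ℕ) (ω : Ω) : ℝ → EReal :=
  fun θ => (((n : ℝ)⁻¹ * ∑ i ∈ Finset.range n, Real.exp (θ * X i ω) : ℝ) : EReal)

/-- The rate value `I_M(f) = -inf_{k ≥ 1} limsup_n (1/n) log ℙ(M_n ∈ V_k(f))`. -/
def IM {Ω : Type*} [MeasurableSpace Ω] (P : Measure Ω) (X : ℕ → Ω → ℝ)
    (f : ℝ → EReal) : EReal :=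
  - ⨅ k ∈ Set.Ici 1, limsup
      (fun n : ℕ => (((n : ℝ)⁻¹ : ℝ) : EReal) * elog (P {ω | Mn X n ω ∈ Vk k f})) atTop

/-- `f` is lower semicontinuous, convex and `[0,∞]`-valued. -/
def IsAdm0 (f : ℝ → EReal) : Prop :=
  LowerSemicontinuous f ∧ ERConvex f ∧ ∀ θ, 0 ≤ f θ

def etaSet (f : ℝ → EReal) (k : ℕ) : Set ℝ :=
  {θ | |θ| < 2 * (k : ℝ) + 2 ∧ f θ < ((2 * (k : ℝ) + 2 : ℝ) : EReal)}

def etaL (f : ℝ → EReal) (k : ℕ) : ℝ := sInf (etaSet f k)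

def etaR (f : ℝ → EReal) (k : ℕ) : ℝ := sSup (etaSet f k)

/-- `d((a, f a), (b, f b)) < δ` in the box metric on `ℝ × (−∞,∞]`, where a point
with infinite second coordinate is at infinite distance from every point. -/
def closePts (f : ℝ → EReal) (a b δ : ℝ) : Prop :=
  |a - b| < δ ∧ f a < f b + (δ : EReal) ∧ f b < f a + (δ : EReal)

/-- `ε` is admissible for `f` at level `k`. -/
def Adm (f : ℝ → EReal) (k : ℕ) (ε : ℝ) : Prop :=
  0 < ε ∧ ε < (etaR f k - etaL f k) / 2 ∧
  (∀ a ∈ Set.Icc (etaL f k) (etaL f k + ε), ∀ b ∈ Set.Icc (etaL f k) (etaL f k + ε),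
    closePts f a b (1 / (2 * (k : ℝ)))) ∧
  (∀ a ∈ Set.Icc (etaR f k - ε) (etaR f k), ∀ b ∈ Set.Icc (etaR f k - ε) (etaR f k),
    closePts f a b (1 / (2 * (k : ℝ))))

/-- The shifted and curtailed function `f♯_k` (built using a given `ε`). -/
def fsharp (f : ℝ → EReal) (k : ℕ) (ε : ℝ) : ℝ → EReal :=
  fun θ => if θ ∈ Set.Icc (etaL f k + ε) (etaR f k - ε)
    then f θ + ((1 / (2 * (k : ℝ)) : ℝ) : EReal) else ⊤

def eInfD (f : ℝ → EReal) : EReal := sInf ((fun θ : ℝ => (θ : EReal)) '' effDom f)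

def eSupD (f : ℝ → EReal) : EReal := sSup ((fun θ : ℝ => (θ : EReal)) '' effDom f)

/-- `g ⋘ h` : `inf D_g < inf D_h`, `sup D_h < sup D_g` and `g < h` on
`[inf D_h, sup D_h]`. -/
def lll (g h : ℝ → EReal) : Prop :=
  eInfD g < eInfD h ∧ eSupD h < eSupD g ∧
    ∀ θ : ℝ, eInfD h ≤ (θ : EReal) → (θ : EReal) ≤ eSupD h → g θ < h θ

/-- The local convex base element `A_k(f) = V_k(f♯_k) ∩ {g : g ⋘ f♯_k}`, inside
the class of lower semicontinuous convex `[0,∞]`-valued functions. -/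
def Ak (f : ℝ → EReal) (k : ℕ) (ε : ℝ) : Set (ℝ → EReal) :=
  {g | IsAdm0 g ∧ g ∈ Vk k (fsharp f k ε) ∧ lll g (fsharp f k ε)}


/-!
The event `{M_n ∈ 𝒜}` is the event that the sample `(X_0, …, X_{n-1})` lies in the set `U_n` of
samples whose empirical mgf belongs to `𝒜`. Since `M_{n+m} = (n M_n + m M'_m) / (n + m)`, where
`M'_m` is built from `X_n, …, X_{n+m-1}`, and since `A_k(f)`, and `V_k(f)` for `f` finite only at
`0`, are closed under convex combinations of finite normalized convex functions, independence gives
`ℙ(M_{n+m} ∈ 𝒜) ≥ ℙ(M_n ∈ 𝒜) ℙ(M_m ∈ 𝒜)`. Fekete's lemma then makes `(1/n) log ℙ(M_n ∈ 𝒜)`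
converge to its supremum, provided the probabilities are eventually positive as soon as one of
them is. This holds because `𝒜` is open for locally uniform convergence: a sample in `U_N` with
all its points in the support of `μ`, repeated cyclically, has for every large `n` an empirical mgf
close to the original one, and every small box around that sample has positive `μ^n`-mass.
-/

open scoped Topology

lemma bddAbove_awGap_image (A B : Set (ℝ × ℝ)) (r : ℝ) :
    BddAbove ((fun x => |infDist x A - infDist x B|) '' closedBall (0 : ℝ × ℝ) r) :=
  (isCompact_closedBall _ _).bddAbove_image
    ((continuous_infDist_pt A).sub (continuous_infDist_pt B)).abs.continuousOn

lemma le_awGap {A B : Set (ℝ × ℝ)} {r : ℝ} {x : ℝ × ℝ} (hx : x ∈ closedBall (0 : ℝ × ℝ) r) :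
    |infDist x A - infDist x B| ≤ awGap A B r :=
  le_csSup (bddAbove_awGap_image A B r) (mem_image_of_mem _ hx)

lemma awGap_nonneg (A B : Set (ℝ × ℝ)) (r : ℝ) : 0 ≤ awGap A B r :=
  Real.sSup_nonneg <| by rintro _ ⟨x, -, rfl⟩; exact abs_nonneg _

lemma awGap_le {A B : Set (ℝ × ℝ)} {r C : ℝ} (hC : 0 ≤ C)
    (h : ∀ x ∈ closedBall (0 : ℝ × ℝ) r, |infDist x A - infDist x B| ≤ C) :
    awGap A B r ≤ C :=
  Real.sSup_le (by rintro _ ⟨x, hx, rfl⟩; exact h x hx) hC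

def ofRealFn (p : ℝ → ℝ) : ℝ → EReal := fun θ => (p θ : EReal)

lemma mem_epiE_ofRealFn {p : ℝ → ℝ} {x : ℝ × ℝ} : x ∈ epiE (ofRealFn p) ↔ p x.1 ≤ x.2 :=
  EReal.coe_le_coe_iff

lemma effDom_ofRealFn (p : ℝ → ℝ) : effDom (ofRealFn p) = univ :=
  eq_univ_of_forall fun _ => EReal.coe_lt_top _

lemma eInfD_ofRealFn (p : ℝ → ℝ) : eInfD (ofRealFn p) = ⊥ := by
  rw [eInfD, effDom_ofRealFn, image_univ, sInf_eq_bot]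
  intro b hb
  obtain ⟨x, -, hx⟩ := EReal.lt_iff_exists_real_btwn.1 hb
  exact ⟨x, mem_range_self x, hx⟩

lemma eSupD_ofRealFn (p : ℝ → ℝ) : eSupD (ofRealFn p) = ⊤ := by
  rw [eSupD, effDom_ofRealFn, image_univ, sSup_eq_top]
  intro b hb
  obtain ⟨x, hx, -⟩ := EReal.lt_iff_exists_real_btwn.1 hb
  exact ⟨x, mem_range_self x, hx⟩

lemma infDist_epiE_le_of_le_add {p q : ℝ → ℝ} {δ : ℝ} (hδ : 0 ≤ δ) {y : ℝ × ℝ}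
    (hy : y ∈ epiE (ofRealFn q)) (hpq : p y.1 ≤ q y.1 + δ) :
    infDist y (epiE (ofRealFn p)) ≤ δ := by
  have hmem : (y.1, y.2 + δ) ∈ epiE (ofRealFn p) :=
    mem_epiE_ofRealFn.2 (by linarith [mem_epiE_ofRealFn.1 hy])
  refine (infDist_le_dist_of_mem hmem).trans ?_
  simp [Prod.dist_eq, abs_of_nonneg hδ, hδ]

/-- Only the part of `epi q` over `[-(2k+2), 2k+2]` is seen from the ball of radius `k`,
because `(0, 1) ∈ epi q` is within `k + 1` of every point of that ball. -/
lemma infDist_epiE_le_add {p q : ℝ → ℝ} (hq0 : q 0 ≤ 1) {k δ : ℝ} (hδ : 0 ≤ δ)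
    (hpq : ∀ θ ∈ Icc (-(2 * k + 2)) (2 * k + 2), p θ ≤ q θ + δ) {x : ℝ × ℝ}
    (hx : x ∈ closedBall (0 : ℝ × ℝ) k) :
    infDist x (epiE (ofRealFn p)) ≤ infDist x (epiE (ofRealFn q)) + δ := by
  have hx' : ‖x‖ ≤ k := mem_closedBall_zero_iff.1 hx
  have h01 : ((0 : ℝ), (1 : ℝ)) ∈ epiE (ofRealFn q) := mem_epiE_ofRealFn.2 hq0
  have hfar : infDist x (epiE (ofRealFn q)) ≤ k + 1 :=
    calc infDist x (epiE (ofRealFn q)) ≤ dist x (0, 1) := infDist_le_dist_of_mem h01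
      _ ≤ ‖x‖ + ‖((0 : ℝ), (1 : ℝ))‖ := dist_le_norm_add_norm _ _
      _ ≤ k + 1 := by simp [hx']
  refine le_of_forall_pos_le_add fun ε hε => ?_
  obtain ⟨y, hy, hxy⟩ := (infDist_lt_iff ⟨_, h01⟩).1
    (lt_add_of_pos_right (infDist x (epiE (ofRealFn q))) (lt_min hε one_pos))
  have hy1 : |y.1| ≤ 2 * k + 2 :=
    calc |y.1| ≤ ‖y‖ := norm_fst_le y
      _ ≤ ‖x‖ + dist x y := by
          simpa only [dist_zero_right, dist_comm y x, add_comm] using dist_triangle y x 0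
      _ ≤ 2 * k + 2 := by linarith [min_le_right ε 1]
  calc infDist x (epiE (ofRealFn p)) ≤ infDist y (epiE (ofRealFn p)) + dist x y :=
        infDist_le_infDist_add_dist
    _ ≤ δ + (infDist x (epiE (ofRealFn q)) + ε) := by
        gcongr
        · exact infDist_epiE_le_of_le_add hδ hy (hpq y.1 (abs_le.1 hy1))
        · exact hxy.le.trans (by gcongr; exact min_le_left ε 1)
    _ = infDist x (epiE (ofRealFn q)) + δ + ε := by ring

lemma awGap_le_awGap_add {p q : ℝ → ℝ} (hp0 : p 0 ≤ 1) (hq0 : q 0 ≤ 1) {k δ : ℝ} (hδ : 0 ≤ δ)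
    (hpq : ∀ θ ∈ Icc (-(2 * k + 2)) (2 * k + 2), |p θ - q θ| ≤ δ) (B : Set (ℝ × ℝ)) :
    awGap (epiE (ofRealFn p)) B k ≤ awGap (epiE (ofRealFn q)) B k + δ := by
  refine awGap_le (add_nonneg (awGap_nonneg _ _ _) hδ) fun x hx => ?_
  have hpq' := fun θ hθ => abs_le.1 (hpq θ hθ)
  have h₁ := infDist_epiE_le_add (p := p) hq0 hδ (fun θ hθ => by linarith [(hpq' θ hθ).2]) hx
  have h₂ := infDist_epiE_le_add (p := q) (q := p) hp0 hδ
    (fun θ hθ => by linarith [(hpq' θ hθ).1]) hx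
  have h₃ := abs_le.1 (le_awGap (A := epiE (ofRealFn q)) (B := B) hx)
  rw [abs_le]
  constructor <;> linarith

lemma convexComb_apply (p q : ℝ → ℝ) (a b θ : ℝ) :
    (a • p + b • q) θ = a * p θ + b * q θ := rfl

lemma inter_epiE_subset_epiE_convexComb {p q : ℝ → ℝ} {a b : ℝ} (ha : 0 ≤ a) (hb : 0 ≤ b)
    (hab : a + b = 1) :
    epiE (ofRealFn p) ∩ epiE (ofRealFn q) ⊆ epiE (ofRealFn (a • p + b • q)) := by
  rintro x ⟨hp, hq⟩
  rw [mem_epiE_ofRealFn] at *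
  obtain rfl := eq_sub_of_add_eq' hab
  rw [convexComb_apply]
  nlinarith [mul_le_mul_of_nonneg_left hp ha, mul_le_mul_of_nonneg_left hq hb]

lemma epiE_convexComb_subset {p q : ℝ → ℝ} {a b : ℝ} (ha : 0 ≤ a) (hb : 0 ≤ b)
    (hab : a + b = 1) :
    epiE (ofRealFn (a • p + b • q)) ⊆ epiE (ofRealFn p) ∪ epiE (ofRealFn q) := by
  intro x hx
  simp only [mem_union, mem_epiE_ofRealFn] at hx ⊢
  obtain rfl := eq_sub_of_add_eq' hab
  rw [convexComb_apply] at hx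
  by_contra! h
  have hmin : min (p x.1) (q x.1) ≤ a * p x.1 + (1 - a) * q x.1 := by
    nlinarith [mul_nonneg ha (sub_nonneg.2 (min_le_left (p x.1) (q x.1))),
      mul_nonneg hb (sub_nonneg.2 (min_le_right (p x.1) (q x.1)))]
  exact (lt_min h.1 h.2).not_ge (hmin.trans hx)

/-- The epigraph of `a p + b q` lies in `epi p ∪ epi q` and still contains `B`, so its distance to
a point is at least the smaller of the two distances and at most the distance to `B`. -/
lemma awGap_convexComb_le {p q : ℝ → ℝ} {a b : ℝ} (ha : 0 ≤ a) (hb : 0 ≤ b) (hab : a + b = 1)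
    {B : Set (ℝ × ℝ)} (hB : B.Nonempty) (hBp : B ⊆ epiE (ofRealFn p))
    (hBq : B ⊆ epiE (ofRealFn q)) (k : ℝ) :
    awGap (epiE (ofRealFn (a • p + b • q))) B k ≤
      max (awGap (epiE (ofRealFn p)) B k) (awGap (epiE (ofRealFn q)) B k) := by
  have hBg := (subset_inter hBp hBq).trans (inter_epiE_subset_epiE_convexComb ha hb hab)
  refine awGap_le ((awGap_nonneg _ _ _).trans (le_max_left _ _)) fun x hx => ?_
  have hmin : min (infDist x (epiE (ofRealFn p))) (infDist x (epiE (ofRealFn q))) ≤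
      infDist x (epiE (ofRealFn (a • p + b • q))) := by
    refine le_of_forall_gt fun c hc => ?_
    obtain ⟨y, hy, hxy⟩ := (infDist_lt_iff (hB.mono hBg)).1 hc
    rcases epiE_convexComb_subset ha hb hab hy with hy' | hy'
    · exact (min_le_left _ _).trans_lt ((infDist_le_dist_of_mem hy').trans_lt hxy)
    · exact (min_le_right _ _).trans_lt ((infDist_le_dist_of_mem hy').trans_lt hxy)
  have hg := infDist_le_infDist_of_subset (x := x) hBg hB
  have hp := infDist_le_infDist_of_subset (x := x) hBp hB
  have hq := infDist_le_infDist_of_subset (x := x) hBq hB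
  have hpB := le_awGap (A := epiE (ofRealFn p)) (B := B) hx
  have hqB := le_awGap (A := epiE (ofRealFn q)) (B := B) hx
  rw [abs_of_nonpos (by linarith)] at hpB hqB ⊢
  rcases min_choice (infDist x (epiE (ofRealFn p))) (infDist x (epiE (ofRealFn q))) with h | h <;>
    rw [h] at hmin
  · exact le_max_of_le_left (by linarith)
  · exact le_max_of_le_right (by linarith)

structure IsNormalizedConvex (p : ℝ → ℝ) : Prop where
  convexOn : ConvexOn ℝ univ p
  nonneg : ∀ θ, 0 ≤ p θ
  map_zero : p 0 = 1

namespace IsNormalizedConvex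

variable {p q : ℝ → ℝ}

lemma continuous (hp : IsNormalizedConvex p) : Continuous p :=
  continuousOn_univ.1 (hp.convexOn.continuousOn isOpen_univ)

lemma isAdm0 (hp : IsNormalizedConvex p) : IsAdm0 (ofRealFn p) := by
  refine ⟨(continuous_coe_real_ereal.comp hp.continuous).lowerSemicontinuous,
    fun x y a b ha hb hab => ?_, fun θ => EReal.coe_nonneg.2 (hp.nonneg θ)⟩
  simp only [ofRealFn, ← EReal.coe_mul, ← EReal.coe_add, EReal.coe_le_coe_iff]
  exact hp.convexOn.2 (mem_univ x) (mem_univ y) ha hb hab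

lemma convexComb (hp : IsNormalizedConvex p) (hq : IsNormalizedConvex q) {a b : ℝ}
    (ha : 0 ≤ a) (hb : 0 ≤ b) (hab : a + b = 1) : IsNormalizedConvex (a • p + b • q) where
  convexOn := (hp.convexOn.smul ha).add (hq.convexOn.smul hb)
  nonneg θ := add_nonneg (mul_nonneg ha (hp.nonneg θ)) (mul_nonneg hb (hq.nonneg θ))
  map_zero := by rw [convexComb_apply, hp.map_zero, hq.map_zero, mul_one, mul_one, hab]

end IsNormalizedConvex

def IsConvexAmongNormalized (𝒜 : Set (ℝ → EReal)) : Prop :=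
  ∀ ⦃p q : ℝ → ℝ⦄, IsNormalizedConvex p → IsNormalizedConvex q → ofRealFn p ∈ 𝒜 →
    ofRealFn q ∈ 𝒜 → ∀ ⦃a b : ℝ⦄, 0 ≤ a → 0 ≤ b → a + b = 1 → ofRealFn (a • p + b • q) ∈ 𝒜

def IsOpenAmongNormalized (𝒜 : Set (ℝ → EReal)) : Prop :=
  ∀ ⦃p : ℝ → ℝ⦄, IsNormalizedConvex p → ofRealFn p ∈ 𝒜 → ∃ R δ : ℝ, 0 < δ ∧
    ∀ ⦃q : ℝ → ℝ⦄, IsNormalizedConvex q → (∀ θ ∈ Icc (-R) R, |q θ - p θ| ≤ δ) → ofRealFn q ∈ 𝒜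

lemma exists_forall_mem_Vk_of_mem_Vk {k : ℕ} {h : ℝ → EReal} {p : ℝ → ℝ}
    (hp : IsNormalizedConvex p) (hpV : ofRealFn p ∈ Vk k h) : ∃ δ : ℝ, 0 < δ ∧
    ∀ ⦃q : ℝ → ℝ⦄, IsNormalizedConvex q →
      (∀ θ ∈ Icc (-(2 * (k : ℝ) + 2)) (2 * k + 2), |q θ - p θ| ≤ δ) → ofRealFn q ∈ Vk k h := by
  have hpV' : awGap (epiE (ofRealFn p)) (epiE h) k < 1 / k := hpV
  refine ⟨(1 / k - awGap (epiE (ofRealFn p)) (epiE h) k) / 2, by linarith, fun q hq hqp => ?_⟩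
  have := awGap_le_awGap_add hq.map_zero.le hp.map_zero.le (by linarith) hqp (epiE h)
  show awGap (epiE (ofRealFn q)) (epiE h) k < 1 / k
  linarith

lemma isOpenAmongNormalized_Vk (k : ℕ) (h : ℝ → EReal) : IsOpenAmongNormalized (Vk k h) :=
  fun _ hp hpV => ⟨_, exists_forall_mem_Vk_of_mem_Vk hp hpV⟩

lemma convexComb_mem_Vk {k : ℕ} {h : ℝ → EReal} (hne : (epiE h).Nonempty) {p q : ℝ → ℝ}
    (hp : epiE h ⊆ epiE (ofRealFn p)) (hq : epiE h ⊆ epiE (ofRealFn q))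
    (hpV : ofRealFn p ∈ Vk k h) (hqV : ofRealFn q ∈ Vk k h) {a b : ℝ} (ha : 0 ≤ a) (hb : 0 ≤ b)
    (hab : a + b = 1) : ofRealFn (a • p + b • q) ∈ Vk k h :=
  (awGap_convexComb_le ha hb hab hne hp hq k).trans_lt (max_lt hpV hqV)

lemma epiE_subset_of_eq_top_of_ne_zero {f : ℝ → EReal} (hf0 : f 0 = 1)
    (hftop : ∀ θ : ℝ, θ ≠ 0 → f θ = ⊤) {p : ℝ → ℝ} (hp0 : p 0 = 1) :
    epiE f ⊆ epiE (ofRealFn p) := by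
  rintro ⟨θ, y⟩ (hx : f θ ≤ y)
  rcases eq_or_ne θ 0 with rfl | hθ
  · rw [hf0, ← EReal.coe_one, EReal.coe_le_coe_iff] at hx
    exact mem_epiE_ofRealFn.2 (hp0.trans_le hx)
  · exact absurd (hftop θ hθ ▸ hx) (EReal.coe_lt_top y).not_ge

lemma isConvexAmongNormalized_Vk_of_eq_top {f : ℝ → EReal} (hf0 : f 0 = 1)
    (hftop : ∀ θ : ℝ, θ ≠ 0 → f θ = ⊤) (k : ℕ) : IsConvexAmongNormalized (Vk k f) :=
  fun _ _ hp hq hpV hqV _ _ ha hb hab =>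
    convexComb_mem_Vk ⟨(0, 1), by simp [epiE, hf0]⟩
      (epiE_subset_of_eq_top_of_ne_zero hf0 hftop hp.map_zero)
      (epiE_subset_of_eq_top_of_ne_zero hf0 hftop hq.map_zero) hpV hqV ha hb hab

lemma lowerSemicontinuous_ite_top {α : Type*} [TopologicalSpace α] {g : α → EReal}
    (hg : LowerSemicontinuous g) {C : Set α} [DecidablePred (· ∈ C)] (hC : IsClosed C) :
    LowerSemicontinuous fun x => if x ∈ C then g x else ⊤ := by
  intro x y hy
  dsimp only at hy ⊢
  by_cases hx : x ∈ C
  · rw [if_pos hx] at hy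
    filter_upwards [hg x y hy] with z hz
    split_ifs
    exacts [hz, hy.trans_le le_top]
  · rw [if_neg hx] at hy
    filter_upwards [hC.isOpen_compl.mem_nhds hx] with z hz
    rwa [if_neg hz]

lemma lowerSemicontinuous_fsharp {f : ℝ → EReal} (hf : LowerSemicontinuous f) (k : ℕ) (ε : ℝ) :
    LowerSemicontinuous (fsharp f k ε) := by
  unfold fsharp
  exact lowerSemicontinuous_ite_top (hf.add' lowerSemicontinuous_const fun _ =>
    EReal.continuousAt_add (Or.inr (EReal.coe_ne_bot _)) (Or.inr (EReal.coe_ne_top _))) isClosed_Icc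

lemma effDom_fsharp_subset (f : ℝ → EReal) (k : ℕ) (ε : ℝ) :
    effDom (fsharp f k ε) ⊆ Icc (etaL f k + ε) (etaR f k - ε) := by
  intro θ hθ
  by_contra hθ'
  exact hθ.ne (if_neg hθ' : fsharp f k ε θ = ⊤)

lemma exists_pos_lt_of_lowerSemicontinuous {α : Type*} [TopologicalSpace α] {g : α → EReal}
    (hg : LowerSemicontinuous g) {K : Set α} (hK : IsCompact K) (hpos : ∀ x ∈ K, 0 < g x) :
    ∃ δ : ℝ, 0 < δ ∧ ∀ x ∈ K, (δ : EReal) < g x := by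
  rcases K.eq_empty_or_nonempty with rfl | hne
  · exact ⟨1, one_pos, by simp⟩
  obtain ⟨x₀, hx₀, hmin⟩ := LowerSemicontinuousOn.exists_isMinOn hne hK (hg.lowerSemicontinuousOn K)
  obtain ⟨δ, hδ₀, hδ⟩ := EReal.lt_iff_exists_real_btwn.1 (hpos x₀ hx₀)
  exact ⟨δ, EReal.coe_pos.1 hδ₀, fun x hx => hδ.trans_le (hmin hx)⟩

lemma exists_add_lt_of_lt_on {h : ℝ → EReal} (hh : LowerSemicontinuous h) {p : ℝ → ℝ}
    (hp : Continuous p) {K : Set ℝ} (hK : IsCompact K) (hlt : ∀ θ ∈ K, (p θ : EReal) < h θ) :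
    ∃ δ : ℝ, 0 < δ ∧ ∀ θ ∈ K, ((p θ + δ : ℝ) : EReal) < h θ := by
  have hgap : LowerSemicontinuous fun θ => h θ - (p θ : EReal) := by
    simp_rw [sub_eq_add_neg, ← EReal.coe_neg]
    exact hh.add' (continuous_coe_real_ereal.comp hp.neg).lowerSemicontinuous fun _ =>
      EReal.continuousAt_add (Or.inr (EReal.coe_ne_bot _)) (Or.inr (EReal.coe_ne_top _))
  obtain ⟨δ, hδ, hlt'⟩ :=
    exists_pos_lt_of_lowerSemicontinuous hgap hK fun θ hθ => EReal.sub_pos.2 (hlt θ hθ)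
  refine ⟨δ, hδ, fun θ hθ => ?_⟩
  rw [add_comm, EReal.coe_add]
  exact (EReal.lt_sub_iff_add_lt (Or.inl (EReal.coe_ne_bot _)) (Or.inl (EReal.coe_ne_top _))).1
    (hlt' θ hθ)

lemma coe_convexComb_lt {x₁ x₂ a b : ℝ} {y : EReal} (ha : 0 ≤ a) (hb : 0 ≤ b) (hab : a + b = 1)
    (h₁ : (x₁ : EReal) < y) (h₂ : (x₂ : EReal) < y) : ((a * x₁ + b * x₂ : ℝ) : EReal) < y := by
  have hle : a * x₁ + b * x₂ ≤ max x₁ x₂ := by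
    obtain rfl := eq_sub_of_add_eq' hab
    nlinarith [mul_le_mul_of_nonneg_left (le_max_left x₁ x₂) ha,
      mul_le_mul_of_nonneg_left (le_max_right x₁ x₂) hb]
  refine (EReal.coe_le_coe_iff.2 hle).trans_lt ?_
  rw [EReal.coe_strictMono.monotone.map_max]
  exact max_lt h₁ h₂

def domIcc (h : ℝ → EReal) : Set ℝ := ((↑) : ℝ → EReal) ⁻¹' Icc (eInfD h) (eSupD h)

lemma isClosed_domIcc (h : ℝ → EReal) : IsClosed (domIcc h) :=
  isClosed_Icc.preimage continuous_coe_real_ereal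

lemma coe_le_eInfD {h : ℝ → EReal} {a b : ℝ} (hdom : effDom h ⊆ Icc a b) :
    (a : EReal) ≤ eInfD h :=
  le_sInf <| by rintro _ ⟨θ, hθ, rfl⟩; exact EReal.coe_le_coe_iff.2 (hdom hθ).1

lemma eSupD_le_coe {h : ℝ → EReal} {a b : ℝ} (hdom : effDom h ⊆ Icc a b) :
    eSupD h ≤ (b : EReal) :=
  sSup_le <| by rintro _ ⟨θ, hθ, rfl⟩; exact EReal.coe_le_coe_iff.2 (hdom hθ).2

lemma domIcc_subset {h : ℝ → EReal} {a b : ℝ} (hdom : effDom h ⊆ Icc a b) :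
    domIcc h ⊆ Icc a b := fun _ hθ =>
  ⟨EReal.coe_le_coe_iff.1 ((coe_le_eInfD hdom).trans hθ.1),
    EReal.coe_le_coe_iff.1 (hθ.2.trans (eSupD_le_coe hdom))⟩

lemma epiE_subset_of_lt_on_domIcc {h : ℝ → EReal} {p : ℝ → ℝ}
    (hlt : ∀ θ ∈ domIcc h, (p θ : EReal) < h θ) : epiE h ⊆ epiE (ofRealFn p) := by
  rintro ⟨θ, y⟩ (hy : h θ ≤ y)
  have hθ : θ ∈ effDom h := hy.trans_lt (EReal.coe_lt_top y)
  exact mem_epiE_ofRealFn.2 <| EReal.coe_le_coe_iff.1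
    ((hlt θ ⟨sInf_le ⟨θ, hθ, rfl⟩, le_sSup ⟨θ, hθ, rfl⟩⟩).trans_le hy).le

lemma ofRealFn_mem_Ak_iff {f : ℝ → EReal} {k : ℕ} {ε : ℝ} {p : ℝ → ℝ}
    (hp : IsNormalizedConvex p) : ofRealFn p ∈ Ak f k ε ↔
      ofRealFn p ∈ Vk k (fsharp f k ε) ∧
        ∀ θ ∈ domIcc (fsharp f k ε), (p θ : EReal) < fsharp f k ε θ := by
  have hdom := effDom_fsharp_subset f k ε
  have hinf : ⊥ < eInfD (fsharp f k ε) := (EReal.bot_lt_coe _).trans_le (coe_le_eInfD hdom)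
  have hsup : eSupD (fsharp f k ε) < ⊤ := (eSupD_le_coe hdom).trans_lt (EReal.coe_lt_top _)
  change IsAdm0 _ ∧ _ ∧ lll _ _ ↔ _
  simp only [lll, domIcc, eInfD_ofRealFn, eSupD_ofRealFn, hinf, hsup, true_and,
    and_iff_right hp.isAdm0, mem_preimage, mem_Icc, and_imp]
  rfl

lemma not_ofRealFn_mem_Vk_of_epiE_eq_empty {h : ℝ → EReal} (hh : epiE h = ∅) {k : ℕ}
    (hk : 1 ≤ k) {p : ℝ → ℝ} (hp : ∀ θ, 0 ≤ p θ) : ofRealFn p ∉ Vk k h := by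
  intro hpV
  have hk' : (1 : ℝ) ≤ k := Nat.one_le_cast.2 hk
  have hx : ((0 : ℝ), -(k : ℝ)) ∈ closedBall (0 : ℝ × ℝ) k := by
    simp [Prod.norm_def]
  have hfar : (k : ℝ) ≤ infDist ((0 : ℝ), -(k : ℝ)) (epiE (ofRealFn p)) := by
    refine (le_infDist ⟨(0, p 0), mem_epiE_ofRealFn.2 le_rfl⟩).2 fun y hy => ?_
    have hy₂ : 0 ≤ y.2 := (hp y.1).trans (mem_epiE_ofRealFn.1 hy)
    refine le_trans ?_ (le_max_right _ _)
    rw [Real.dist_eq, abs_sub_comm]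
    exact le_trans (by linarith) (le_abs_self _)
  -- `infDist x ∅ = 0`, so the gap at `(0, -k)` is the whole distance to `epi p`.
  have hgap := (le_awGap (A := epiE (ofRealFn p)) (B := epiE h) hx).trans_lt hpV
  rw [hh, infDist_empty, sub_zero, abs_of_nonneg infDist_nonneg] at hgap
  have : 1 / (k : ℝ) ≤ k := by rw [div_le_iff₀ (by linarith)]; nlinarith
  linarith

lemma isConvexAmongNormalized_Ak (f : ℝ → EReal) {k : ℕ} (hk : 1 ≤ k) (ε : ℝ) :
    IsConvexAmongNormalized (Ak f k ε) := by
  intro p q hp hq hpA hqA a b ha hb hab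
  rcases (epiE (fsharp f k ε)).eq_empty_or_nonempty with hemp | hne
  · exact absurd hpA.2.1 (not_ofRealFn_mem_Vk_of_epiE_eq_empty hemp hk hp.nonneg)
  obtain ⟨hpV, hplt⟩ := (ofRealFn_mem_Ak_iff hp).1 hpA
  obtain ⟨hqV, hqlt⟩ := (ofRealFn_mem_Ak_iff hq).1 hqA
  exact (ofRealFn_mem_Ak_iff (hp.convexComb hq ha hb hab)).2
    ⟨convexComb_mem_Vk hne (epiE_subset_of_lt_on_domIcc hplt) (epiE_subset_of_lt_on_domIcc hqlt)
      hpV hqV ha hb hab,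
    fun θ hθ => coe_convexComb_lt ha hb hab (hplt θ hθ) (hqlt θ hθ)⟩

lemma isOpenAmongNormalized_Ak {f : ℝ → EReal} (hf : LowerSemicontinuous f) (k : ℕ) (ε : ℝ) :
    IsOpenAmongNormalized (Ak f k ε) := by
  intro p hp hpA
  obtain ⟨hpV, hplt⟩ := (ofRealFn_mem_Ak_iff hp).1 hpA
  have hK : IsCompact (domIcc (fsharp f k ε)) := isCompact_Icc.of_isClosed_subset
    (isClosed_domIcc _) (domIcc_subset (effDom_fsharp_subset f k ε))
  obtain ⟨R, hR⟩ := hK.isBounded.subset_closedBall 0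
  obtain ⟨δ₁, hδ₁, hV⟩ := exists_forall_mem_Vk_of_mem_Vk hp hpV
  obtain ⟨δ₂, hδ₂, hmargin⟩ :=
    exists_add_lt_of_lt_on (lowerSemicontinuous_fsharp hf k ε) hp.continuous hK hplt
  set R' := max R (2 * k + 2)
  have hclose : ∀ {q : ℝ → ℝ} {θ : ℝ}, (∀ θ ∈ Icc (-R') R', |q θ - p θ| ≤ min δ₁ δ₂) →
      |θ| ≤ R' → |q θ - p θ| ≤ min δ₁ δ₂ := fun hqp hθ => hqp _ (abs_le.1 hθ)
  refine ⟨R', min δ₁ δ₂, lt_min hδ₁ hδ₂, fun q hq hqp => (ofRealFn_mem_Ak_iff hq).2 ⟨?_, ?_⟩⟩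
  · refine hV hq fun θ hθ => (hclose hqp (abs_le.2 ⟨?_, ?_⟩)).trans (min_le_left _ _) <;>
      linarith [hθ.1, hθ.2, le_max_right R (2 * k + 2)]
  · intro θ hθ
    have hθR : |θ| ≤ R' := by
      have := mem_closedBall_zero_iff.1 (hR hθ)
      exact this.trans (le_max_left _ _)
    have hqθ := (abs_le.1 ((hclose hqp hθR).trans (min_le_right _ _))).2
    exact (EReal.coe_le_coe_iff.2 (by linarith)).trans_lt (hmargin θ hθ)

def empMGF {n : ℕ} (x : Fin n → ℝ) : ℝ → ℝ := fun θ => (n : ℝ)⁻¹ * ∑ i, Real.exp (θ * x i)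

lemma isNormalizedConvex_empMGF {n : ℕ} (hn : n ≠ 0) (x : Fin n → ℝ) :
    IsNormalizedConvex (empMGF x) where
  convexOn := by
    refine ⟨convex_univ, fun θ₁ _ θ₂ _ a b ha hb hab => ?_⟩
    have hexp : ∀ i, Real.exp ((a * θ₁ + b * θ₂) * x i) ≤
        a * Real.exp (θ₁ * x i) + b * Real.exp (θ₂ * x i) := fun i => by
      simpa only [smul_eq_mul, add_mul, mul_assoc] using
        convexOn_exp.2 (mem_univ (θ₁ * x i)) (mem_univ (θ₂ * x i)) ha hb hab
    calc empMGF x (a • θ₁ + b • θ₂)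
        ≤ (n : ℝ)⁻¹ * ∑ i, (a * Real.exp (θ₁ * x i) + b * Real.exp (θ₂ * x i)) := by
          unfold empMGF
          gcongr with i
          exact hexp i
      _ = a • empMGF x θ₁ + b • empMGF x θ₂ := by
          simp only [empMGF, smul_eq_mul, Finset.sum_add_distrib, ← Finset.mul_sum]
          ring
  nonneg θ := by unfold empMGF; positivity
  map_zero := by simp [empMGF, hn]

lemma eventually_forall_abs_empMGF_sub_le {n : ℕ} (x₀ : Fin n → ℝ) (R : ℝ) {η : ℝ}
    (hη : 0 < η) : ∀ᶠ x in 𝓝 x₀, ∀ θ ∈ Icc (-R) R, |empMGF x θ - empMGF x₀ θ| ≤ η := by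
  have hcont : Continuous fun z : (Fin n → ℝ) × Icc (-R) R => empMGF z.1 z.2 := by
    unfold empMGF
    fun_prop
  filter_upwards [Metric.tendstoUniformly_iff.1
    (hcont.tendstoUniformly (fun x (θ : Icc (-R) R) => empMGF x θ) x₀) η hη] with x hx θ hθ
  rw [abs_sub_comm]
  exact (hx ⟨θ, hθ⟩).le

lemma sum_range_mul_of_periodic {g : ℕ → ℝ} {N : ℕ} (hg : Function.Periodic g N) (q : ℕ) :
    ∑ i ∈ Finset.range (q * N), g i = q * ∑ i ∈ Finset.range N, g i := by
  induction q with
  | zero => simp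
  | succ q ih =>
    have hgq : ∀ i, g (q * N + i) = g i := fun i => by
      simpa [add_comm] using hg.nat_mul q i
    rw [add_mul, one_mul, Finset.sum_range_add, ih]
    simp only [hgq, Nat.cast_succ]
    ring

/-- Both values lie in `[q T / n, (q + 1) T / n]`, where `q = n / N` and
`T = ∑ j, exp (θ x_j)`. -/
lemma abs_empMGF_cycle_sub_le {N : ℕ} [NeZero N] (x : Fin N → ℝ) {n : ℕ} (hn : n ≠ 0) (θ : ℝ) :
    |empMGF (fun i : Fin n => x (Fin.ofNat N i)) θ - empMGF x θ| ≤
      (∑ j, Real.exp (θ * x j)) / n := by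
  set g : ℕ → ℝ := fun j => Real.exp (θ * x (Fin.ofNat N j))
  have hg : Function.Periodic g N := fun j => by
    simp only [g, show Fin.ofNat N (j + N) = Fin.ofNat N j from Fin.ext (by simp)]
  have hT : ∑ j, Real.exp (θ * x j) = ∑ i ∈ Finset.range N, g i := by
    rw [← Fin.sum_univ_eq_sum_range]
    simp [g]
  have hgpos : ∀ i, 0 ≤ g i := fun i => (Real.exp_pos _).le
  set q := n / N
  have hqN : q * N ≤ n := Nat.div_mul_le_self n N
  have hnq : n ≤ (q + 1) * N := by
    have := Nat.lt_mul_div_succ n (Nat.pos_of_ne_zero (NeZero.ne N))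
    rw [mul_comm] at this
    exact this.le
  have hlow : q * ∑ i ∈ Finset.range N, g i ≤ ∑ i ∈ Finset.range n, g i := by
    rw [← sum_range_mul_of_periodic hg]
    exact Finset.sum_le_sum_of_subset_of_nonneg (Finset.range_mono hqN) fun i _ _ => hgpos i
  have hup : ∑ i ∈ Finset.range n, g i ≤ (q + 1 : ℕ) * ∑ i ∈ Finset.range N, g i := by
    rw [← sum_range_mul_of_periodic hg]
    exact Finset.sum_le_sum_of_subset_of_nonneg (Finset.range_mono hnq) fun i _ _ => hgpos i
  have hn' : (0 : ℝ) < n := Nat.cast_pos.2 (Nat.pos_of_ne_zero hn)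
  have hN' : (0 : ℝ) < N := Nat.cast_pos.2 (Nat.pos_of_ne_zero (NeZero.ne N))
  have hqN' : (q : ℝ) * N ≤ n := by exact_mod_cast hqN
  have hnq' : (n : ℝ) ≤ (q + 1 : ℕ) * N := by exact_mod_cast hnq
  have hT0 : 0 ≤ ∑ i ∈ Finset.range N, g i := Finset.sum_nonneg fun i _ => hgpos i
  set T := ∑ i ∈ Finset.range N, g i
  set S := ∑ i ∈ Finset.range n, g i
  push_cast at hup hnq'
  have key : |S * N - T * n| ≤ T * N := abs_le.2
    ⟨by nlinarith [mul_le_mul_of_nonneg_left hnq' hT0, mul_le_mul_of_nonneg_right hlow hN'.le],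
     by nlinarith [mul_le_mul_of_nonneg_left hqN' hT0, mul_le_mul_of_nonneg_right hup hN'.le]⟩
  unfold empMGF
  rw [hT, Fin.sum_univ_eq_sum_range g n]
  calc |(n : ℝ)⁻¹ * S - (N : ℝ)⁻¹ * T| = |S * N - T * n| / (n * N) := by
        rw [← abs_of_pos (mul_pos hn' hN'), ← abs_div]
        congr 1
        field_simp
    _ ≤ T * N / (n * N) := by gcongr
    _ = T / n := by field_simp

def sampleSet (𝒜 : Set (ℝ → EReal)) (n : ℕ) : Set (Fin n → ℝ) := {x | ofRealFn (empMGF x) ∈ 𝒜}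

lemma isOpen_sampleSet {𝒜 : Set (ℝ → EReal)} (h𝒜 : IsOpenAmongNormalized 𝒜) {n : ℕ}
    (hn : n ≠ 0) : IsOpen (sampleSet 𝒜 n) := by
  refine isOpen_iff_mem_nhds.2 fun x₀ hx₀ => ?_
  obtain ⟨R, δ, hδ, hmem⟩ := h𝒜 (isNormalizedConvex_empMGF hn x₀) hx₀
  filter_upwards [eventually_forall_abs_empMGF_sub_le x₀ R hδ] with x hx
  exact hmem (isNormalizedConvex_empMGF hn x) hx

lemma exists_mem_forall_mem_support {μ : Measure ℝ} [SigmaFinite μ] {N : ℕ}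
    {S : Set (Fin N → ℝ)} (hS : Measure.pi (fun _ => μ) S ≠ 0) :
    ∃ x ∈ S, ∀ j, x j ∈ μ.support := by
  by_contra! h
  refine hS (measure_mono_null (fun x hx => ?_) (measure_iUnion_null (ι := Fin N)
    (s := fun j => Function.eval j ⁻¹' μ.supportᶜ) fun j =>
    Measure.pi_eval_preimage_null _ (Measure.measure_compl_support (μ := μ))))
  obtain ⟨j, hj⟩ := h x hx
  exact mem_iUnion.2 ⟨j, hj⟩

lemma pi_ball_pos {μ : Measure ℝ} [SigmaFinite μ] {n : ℕ} {y : Fin n → ℝ}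
    (hy : ∀ i, y i ∈ μ.support) {ρ : ℝ} (hρ : 0 < ρ) :
    0 < Measure.pi (fun _ => μ) (ball y ρ) := by
  rw [ball_pi y hρ, Measure.pi_pi]
  exact CanonicallyOrderedAdd.prod_pos.2 fun i _ =>
    (Measure.mem_support_iff_forall _).1 (hy i) _ (ball_mem_nhds _ hρ)

lemma eventually_pi_sampleSet_ne_zero {μ : Measure ℝ} [SigmaFinite μ] {𝒜 : Set (ℝ → EReal)}
    (h𝒜 : IsOpenAmongNormalized 𝒜) {N : ℕ} (hN : N ≠ 0)
    (hpos : Measure.pi (fun _ : Fin N => μ) (sampleSet 𝒜 N) ≠ 0) :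
    ∀ᶠ n in atTop, Measure.pi (fun _ : Fin n => μ) (sampleSet 𝒜 n) ≠ 0 := by
  have : NeZero N := ⟨hN⟩
  obtain ⟨x, hxS, hx⟩ := exists_mem_forall_mem_support hpos
  obtain ⟨R, δ, hδ, hmem⟩ := h𝒜 (isNormalizedConvex_empMGF hN x) hxS
  set C := ∑ j, Real.exp (R * |x j|)
  have hC : ∀ θ ∈ Icc (-R) R, ∑ j, Real.exp (θ * x j) ≤ C := fun θ hθ =>
    Finset.sum_le_sum fun j _ => Real.exp_le_exp.2 <| (le_abs_self _).trans <| by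
      rw [abs_mul]
      exact mul_le_mul_of_nonneg_right (abs_le.2 hθ) (abs_nonneg _)
  filter_upwards [eventually_ne_atTop 0,
    (tendsto_const_div_atTop_nhds_zero_nat C).eventually (gt_mem_nhds (half_pos hδ))]
    with n hn hCn
  set y : Fin n → ℝ := fun i => x (Fin.ofNat N i)
  have hy : ∀ θ ∈ Icc (-R) R, |empMGF y θ - empMGF x θ| ≤ δ / 2 := fun θ hθ =>
    (abs_empMGF_cycle_sub_le x hn θ).trans
      ((div_le_div_of_nonneg_right (hC θ hθ) n.cast_nonneg).trans hCn.le)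
  obtain ⟨ρ, hρ, hball⟩ :=
    Metric.eventually_nhds_iff.1 (eventually_forall_abs_empMGF_sub_le y R (half_pos hδ))
  have hsub : ball y ρ ⊆ sampleSet 𝒜 n := fun z hz =>
    hmem (isNormalizedConvex_empMGF hn z) fun θ hθ =>
      calc |empMGF z θ - empMGF x θ|
          ≤ |empMGF z θ - empMGF y θ| + |empMGF y θ - empMGF x θ| := abs_sub_le _ _ _
        _ ≤ δ / 2 + δ / 2 := add_le_add (hball hz θ hθ) (hy θ hθ)
        _ = δ := add_halves δ
  exact ((pi_ball_pos (fun i => hx _) hρ).trans_le (measure_mono hsub)).ne'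

section Sampling

variable {Ω : Type*}

def block (X : ℕ → Ω → ℝ) (a n : ℕ) (ω : Ω) : Fin n → ℝ := fun i => X (a + i) ω

lemma Mn_eq_ofRealFn_empMGF (X : ℕ → Ω → ℝ) (n : ℕ) (ω : Ω) :
    Mn X n ω = ofRealFn (empMGF (block X 0 n ω)) := by
  ext θ
  simp [Mn, ofRealFn, empMGF, block, Finset.sum_range]

lemma empMGF_block_add (X : ℕ → Ω → ℝ) {n m : ℕ} (hn : n ≠ 0) (hm : m ≠ 0) (ω : Ω) :
    empMGF (block X 0 (n + m) ω) = ((n : ℝ) / (n + m)) • empMGF (block X 0 n ω) +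
      ((m : ℝ) / (n + m)) • empMGF (block X n m ω) := by
  ext θ
  have hn' : (n : ℝ) ≠ 0 := Nat.cast_ne_zero.2 hn
  have hm' : (m : ℝ) ≠ 0 := Nat.cast_ne_zero.2 hm
  have hnm : (n : ℝ) + m ≠ 0 := by positivity
  simp only [empMGF, block, Pi.add_apply, Pi.smul_apply, smul_eq_mul, zero_add]
  rw [← Finset.sum_range (fun i => Real.exp (θ * X i ω)), Finset.sum_range_add,
    ← Finset.sum_range (fun i => Real.exp (θ * X i ω)),
    ← Finset.sum_range (fun i => Real.exp (θ * X (n + i) ω))]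
  push_cast
  field_simp

lemma setOf_Mn_mem_eq (X : ℕ → Ω → ℝ) (𝒜 : Set (ℝ → EReal)) (n : ℕ) :
    {ω | Mn X n ω ∈ 𝒜} = block X 0 n ⁻¹' sampleSet 𝒜 n := by
  ext ω
  change Mn X n ω ∈ 𝒜 ↔ ofRealFn (empMGF (block X 0 n ω)) ∈ 𝒜
  rw [Mn_eq_ofRealFn_empMGF]

variable [MeasurableSpace Ω] {P : Measure Ω} {X : ℕ → Ω → ℝ}
  {μ : Measure ℝ} {𝒜 : Set (ℝ → EReal)}

lemma measurable_block (hmeas : ∀ i, Measurable (X i)) (a n : ℕ) : Measurable (block X a n) :=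
  measurable_pi_lambda _ fun _ => hmeas _

lemma map_block (hmeas : ∀ i, Measurable (X i))
    (hid : ∀ i, Measure.map (X i) P = μ) (hindep : ProbabilityTheory.iIndepFun X P) (a n : ℕ) :
    P.map (block X a n) = Measure.pi fun _ : Fin n => μ := by
  have := (hindep.precomp (g := fun i : Fin n => a + (i : ℕ))
    fun i j hij => Fin.ext (Nat.add_left_cancel hij)).map_fun_eq_pi_map
    fun i => (hmeas _).aemeasurable
  simp only [hid] at this
  exact this

lemma indepFun_block (hmeas : ∀ i, Measurable (X i)) (hindep : ProbabilityTheory.iIndepFun X P)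
    {a n b m : ℕ} (hab : a + n ≤ b) : ProbabilityTheory.IndepFun (block X a n) (block X b m) P := by
  have hdisj : Disjoint (Finset.Ico a (a + n)) (Finset.Ico b (b + m)) :=
    Finset.disjoint_left.2 fun i hi hi' => by
      simp only [Finset.mem_Ico] at hi hi'
      omega
  have hφ : Measurable fun (v : Finset.Ico a (a + n) → ℝ) (i : Fin n) =>
      v ⟨a + i, Finset.mem_Ico.2 (by omega)⟩ := by fun_prop
  have hψ : Measurable fun (v : Finset.Ico b (b + m) → ℝ) (i : Fin m) =>
      v ⟨b + i, Finset.mem_Ico.2 (by omega)⟩ := by fun_prop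
  exact (hindep.indepFun_finset _ _ hdisj hmeas).comp hφ hψ

lemma measure_block_preimage_sampleSet (hmeas : ∀ i, Measurable (X i))
    (hid : ∀ i, Measure.map (X i) P = μ) (hindep : ProbabilityTheory.iIndepFun X P)
    (h𝒜 : IsOpenAmongNormalized 𝒜) (a : ℕ) {n : ℕ} (hn : n ≠ 0) :
    P (block X a n ⁻¹' sampleSet 𝒜 n) = Measure.pi (fun _ : Fin n => μ) (sampleSet 𝒜 n) := by
  rw [← Measure.map_apply (measurable_block hmeas a n) (isOpen_sampleSet h𝒜 hn).measurableSet,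
    map_block hmeas hid hindep]

lemma measure_Mn_mem_mul_le (hmeas : ∀ i, Measurable (X i))
    (hid : ∀ i, Measure.map (X i) P = μ) (hindep : ProbabilityTheory.iIndepFun X P)
    (hconv : IsConvexAmongNormalized 𝒜) (hopen : IsOpenAmongNormalized 𝒜) {n m : ℕ}
    (hn : n ≠ 0) (hm : m ≠ 0) :
    P {ω | Mn X n ω ∈ 𝒜} * P {ω | Mn X m ω ∈ 𝒜} ≤ P {ω | Mn X (n + m) ω ∈ 𝒜} := by
  have hsub : block X 0 n ⁻¹' sampleSet 𝒜 n ∩ block X n m ⁻¹' sampleSet 𝒜 m ⊆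
      block X 0 (n + m) ⁻¹' sampleSet 𝒜 (n + m) := by
    rintro ω ⟨h₁, h₂⟩
    change ofRealFn (empMGF (block X 0 (n + m) ω)) ∈ 𝒜
    rw [empMGF_block_add X hn hm ω]
    exact hconv (isNormalizedConvex_empMGF hn _) (isNormalizedConvex_empMGF hm _) h₁ h₂
      (by positivity) (by positivity) (by field_simp)
  simp only [setOf_Mn_mem_eq]
  calc P (block X 0 n ⁻¹' sampleSet 𝒜 n) * P (block X 0 m ⁻¹' sampleSet 𝒜 m)
      = P (block X 0 n ⁻¹' sampleSet 𝒜 n) * P (block X n m ⁻¹' sampleSet 𝒜 m) := by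
        rw [measure_block_preimage_sampleSet hmeas hid hindep hopen 0 hm,
          measure_block_preimage_sampleSet hmeas hid hindep hopen n hm]
    _ = P (block X 0 n ⁻¹' sampleSet 𝒜 n ∩ block X n m ⁻¹' sampleSet 𝒜 m) :=
        ((indepFun_block hmeas hindep (zero_add n).le).measure_inter_preimage_eq_mul _ _
          (isOpen_sampleSet hopen hn).measurableSet
          (isOpen_sampleSet hopen hm).measurableSet).symm
    _ ≤ P (block X 0 (n + m) ⁻¹' sampleSet 𝒜 (n + m)) := measure_mono hsub

end Sampling

lemma pow_mul_le_of_supermul {b : ℕ → ℝ} (hb0 : ∀ n, 0 ≤ b n)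
    (hmul : ∀ m n, m ≠ 0 → n ≠ 0 → b m * b n ≤ b (m + n)) {m j : ℕ} (hm : m ≠ 0) (hj : j ≠ 0)
    (q : ℕ) : b m ^ q * b j ≤ b (q * m + j) := by
  induction q with
  | zero => simp
  | succ q ih =>
    calc b m ^ (q + 1) * b j = b m * (b m ^ q * b j) := by ring
      _ ≤ b m * b (q * m + j) := mul_le_mul_of_nonneg_left ih (hb0 m)
      _ ≤ b (m + (q * m + j)) := hmul _ _ hm (by omega)
      _ = b ((q + 1) * m + j) := by ring_nf

/-- Fekete's argument: write `n = q m + j` with `j` in the window `[n₀, n₀ + m)`, on which `b` is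
positive, so that `b n ≥ b m ^ q * b j`. -/
lemma exists_log_div_add_le_log_div {b : ℕ → ℝ} (hb0 : ∀ n, 0 ≤ b n) (hb1 : ∀ n, b n ≤ 1)
    (hmul : ∀ m n, m ≠ 0 → n ≠ 0 → b m * b n ≤ b (m + n)) {m : ℕ} (hm : m ≠ 0) (hbm : 0 < b m)
    {n₀ : ℕ} (hn₀ : n₀ ≠ 0) (hpos : ∀ n ≥ n₀, 0 < b n) :
    ∃ d : ℝ, ∀ n ≥ n₀, Real.log (b m) / m + d / n ≤ Real.log (b n) / n := by
  have hne : (Finset.range m).Nonempty := Finset.nonempty_range_iff.2 hm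
  set d := (Finset.range m).inf' hne fun s => Real.log (b (n₀ + s))
  refine ⟨d, fun n hn => ?_⟩
  set q := (n - n₀) / m
  set j := n₀ + (n - n₀) % m
  have hnqj : n = q * m + j := by
    have := Nat.div_add_mod (n - n₀) m
    rw [Nat.mul_comm] at this
    simp only [q, j]
    omega
  have hlog : q * Real.log (b m) + d ≤ Real.log (b n) := by
    have hj : 0 < b j := hpos j (by omega)
    have hd : d ≤ Real.log (b j) :=
      Finset.inf'_le _ (Finset.mem_range.2 (Nat.mod_lt _ (Nat.pos_of_ne_zero hm)))
    calc q * Real.log (b m) + d ≤ Real.log (b m ^ q * b j) := by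
          rw [Real.log_mul (pow_pos hbm q).ne' hj.ne', Real.log_pow]
          linarith
      _ ≤ Real.log (b n) := by
          rw [hnqj]
          exact Real.log_le_log (by positivity) (pow_mul_le_of_supermul hb0 hmul hm (by omega) q)
  have hc : Real.log (b m) ≤ 0 := Real.log_nonpos (hb0 m) (hb1 m)
  have hm' : (0 : ℝ) < m := Nat.cast_pos.2 (Nat.pos_of_ne_zero hm)
  have hn' : (0 : ℝ) < n := Nat.cast_pos.2 (by omega)
  have hqm : (q : ℝ) * m ≤ n := by exact_mod_cast hnqj ▸ Nat.le_add_right (q * m) j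
  calc Real.log (b m) / m + d / n = (Real.log (b m) * n / m + d) / n := by field_simp
    _ ≤ (q * Real.log (b m) + d) / n := by
        gcongr
        rw [div_le_iff₀ hm']
        nlinarith [mul_le_mul_of_nonpos_left hqm hc]
    _ ≤ Real.log (b n) / n := by gcongr

lemma elog_of_ne_zero {p : ℝ≥0∞} (hp : p ≠ 0) : elog p = (Real.log p.toReal : EReal) := if_neg hp

lemma inv_mul_elog_of_ne_zero {p : ℝ≥0∞} (hp : p ≠ 0) (n : ℕ) :
    (((n : ℝ)⁻¹ : ℝ) : EReal) * elog p = ((Real.log p.toReal / n : ℝ) : EReal) := by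
  rw [elog_of_ne_zero hp, ← EReal.coe_mul, inv_mul_eq_div]

lemma inv_mul_elog_nonpos {p : ℝ≥0∞} (hp : p ≤ 1) (n : ℕ) :
    (((n : ℝ)⁻¹ : ℝ) : EReal) * elog p ≤ 0 := by
  rcases eq_or_ne p 0 with rfl | h0
  · rcases n.eq_zero_or_pos with rfl | hn
    · simp
    · rw [elog, if_pos rfl, EReal.coe_mul_bot_of_pos (by positivity)]
      exact bot_le
  · rw [inv_mul_elog_of_ne_zero h0]
    refine EReal.coe_nonpos.2 (div_nonpos_of_nonpos_of_nonneg
      (Real.log_nonpos ENNReal.toReal_nonneg ?_) n.cast_nonneg)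
    simpa using ENNReal.toReal_mono ENNReal.one_ne_top hp

lemma inv_mul_elog_le_liminf {a : ℕ → ℝ≥0∞} (ha : ∀ n, a n ≤ 1)
    (hmul : ∀ m n, m ≠ 0 → n ≠ 0 → a m * a n ≤ a (m + n))
    (hpos : ∀ m, m ≠ 0 → a m ≠ 0 → ∀ᶠ n in atTop, a n ≠ 0) {m : ℕ} (hm : m ≠ 0) :
    (((m : ℝ)⁻¹ : ℝ) : EReal) * elog (a m) ≤
      liminf (fun n : ℕ => (((n : ℝ)⁻¹ : ℝ) : EReal) * elog (a n)) atTop := by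
  rcases eq_or_ne (a m) 0 with ham | ham
  · rw [ham, elog, if_pos rfl, EReal.coe_mul_bot_of_pos (by positivity)]
    exact bot_le
  have hfin : ∀ n, a n ≠ ⊤ := fun n => ne_top_of_le_ne_top ENNReal.one_ne_top (ha n)
  obtain ⟨n₀, hn₀⟩ := eventually_atTop.1 (hpos m hm ham)
  obtain ⟨d, hd⟩ := exists_log_div_add_le_log_div (b := fun n => (a n).toReal)
    (fun n => ENNReal.toReal_nonneg)
    (fun n => by simpa using ENNReal.toReal_mono ENNReal.one_ne_top (ha n))
    (fun m n hm hn => by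
      simpa only [ENNReal.toReal_mul] using ENNReal.toReal_mono (hfin _) (hmul m n hm hn))
    hm (ENNReal.toReal_pos ham (hfin m)) (n₀ := max n₀ 1) (by positivity)
    (fun n hn => ENNReal.toReal_pos (hn₀ n (le_of_max_le_left hn)) (hfin n))
  have hlim : Tendsto (fun n : ℕ => ((Real.log (a m).toReal / m + d / n : ℝ) : EReal)) atTop
      (𝓝 ((Real.log (a m).toReal / m : ℝ) : EReal)) :=
    EReal.tendsto_coe.2 <| by
      simpa using tendsto_const_nhds.add (tendsto_const_div_atTop_nhds_zero_nat d)
  rw [inv_mul_elog_of_ne_zero ham, ← hlim.liminf_eq]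
  refine liminf_le_liminf (eventually_atTop.2 ⟨max n₀ 1, fun n hn => ?_⟩)
  rw [inv_mul_elog_of_ne_zero (hn₀ n (le_of_max_le_left hn))]
  exact EReal.coe_le_coe_iff.2 (hd n hn)

theorem tendsto_inv_mul_elog_of_supermul {a : ℕ → ℝ≥0∞} (ha : ∀ n, a n ≤ 1)
    (hmul : ∀ m n, m ≠ 0 → n ≠ 0 → a m * a n ≤ a (m + n))
    (hpos : ∀ m, m ≠ 0 → a m ≠ 0 → ∀ᶠ n in atTop, a n ≠ 0) :
    Tendsto (fun n : ℕ => (((n : ℝ)⁻¹ : ℝ) : EReal) * elog (a n)) atTop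
      (𝓝 (⨆ n ∈ Ici (1 : ℕ), (((n : ℝ)⁻¹ : ℝ) : EReal) * elog (a n))) := by
  set u := fun n : ℕ => (((n : ℝ)⁻¹ : ℝ) : EReal) * elog (a n)
  have hlimsup : limsup u atTop ≤ ⨆ n ∈ Ici (1 : ℕ), u n :=
    limsup_le_of_le (by isBoundedDefault) (eventually_atTop.2
      ⟨1, fun n hn => le_iSup₂ (f := fun n (_ : n ∈ Ici (1 : ℕ)) => u n) n hn⟩)
  have hliminf : ⨆ n ∈ Ici (1 : ℕ), u n ≤ liminf u atTop := iSup₂_le fun m hm =>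
    inv_mul_elog_le_liminf ha hmul hpos (Nat.one_le_iff_ne_zero.1 hm)
  have hle : liminf u atTop ≤ limsup u atTop := liminf_le_limsup
  exact tendsto_of_liminf_eq_limsup (le_antisymm (hle.trans hlimsup) hliminf)
    (le_antisymm hlimsup (hliminf.trans hle))

theorem tendsto_inv_mul_elog_measure_Mn_mem {Ω : Type*} [MeasurableSpace Ω] {P : Measure Ω}
    [IsProbabilityMeasure P] {X : ℕ → Ω → ℝ} {μ : Measure ℝ} [SigmaFinite μ]
    (hmeas : ∀ i, Measurable (X i)) (hid : ∀ i, Measure.map (X i) P = μ)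
    (hindep : ProbabilityTheory.iIndepFun X P) {𝒜 : Set (ℝ → EReal)}
    (hconv : IsConvexAmongNormalized 𝒜) (hopen : IsOpenAmongNormalized 𝒜) :
    Tendsto (fun n : ℕ => (((n : ℝ)⁻¹ : ℝ) : EReal) * elog (P {ω | Mn X n ω ∈ 𝒜})) atTop
      (𝓝 (⨆ n ∈ Ici (1 : ℕ), (((n : ℝ)⁻¹ : ℝ) : EReal) * elog (P {ω | Mn X n ω ∈ 𝒜}))) ∧
    (⨆ n ∈ Ici (1 : ℕ), (((n : ℝ)⁻¹ : ℝ) : EReal) * elog (P {ω | Mn X n ω ∈ 𝒜})) ≤ 0 := by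
  have hlaw : ∀ {n : ℕ}, n ≠ 0 →
      P {ω | Mn X n ω ∈ 𝒜} = Measure.pi (fun _ : Fin n => μ) (sampleSet 𝒜 n) := fun hn => by
    rw [setOf_Mn_mem_eq, measure_block_preimage_sampleSet hmeas hid hindep hopen 0 hn]
  refine ⟨tendsto_inv_mul_elog_of_supermul (fun _ => prob_le_one)
    (fun _ _ hm hn => measure_Mn_mem_mul_le hmeas hid hindep hconv hopen hm hn)
    fun m hm hpm => ?_, iSup₂_le fun n _ => inv_mul_elog_nonpos prob_le_one n⟩
  rw [hlaw hm] at hpm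
  filter_upwards [eventually_pi_sampleSet_ne_zero hopen hm hpm, eventually_ne_atTop 0]
    with n hn hn₀
  rwa [hlaw hn₀]

/-- Super-additivity: the deviation limits along the sets `A_k(f)` (and along
`V_k(f)` for the function finite only at the origin) exist and equal the
supremum, so the upper and lower deviation functions coincide. -/
theorem super_additivity
    {Ω : Type*} [MeasurableSpace Ω] (P : Measure Ω) [IsProbabilityMeasure P]
    (X : ℕ → Ω → ℝ) (μ : Measure ℝ) [IsProbabilityMeasure μ]
    (hmeas : ∀ i, Measurable (X i))
    (hid : ∀ i, Measure.map (X i) P = μ)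
    (hindep : ProbabilityTheory.iIndepFun X P) :
    (∀ f : ℝ → EReal, IsAdm0 f → f 0 = 1 → effDom f ≠ {0} →
      ∀ k : ℕ, 1 ≤ k → ∀ ε : ℝ, Adm f k ε →
        (Tendsto (fun n : ℕ => (((n : ℝ)⁻¹ : ℝ) : EReal) *
            elog (P {ω | Mn X n ω ∈ Ak f k ε})) atTop
          (nhds (⨆ n ∈ Set.Ici (1 : ℕ), (((n : ℝ)⁻¹ : ℝ) : EReal) *
            elog (P {ω | Mn X n ω ∈ Ak f k ε}))) ∧
         (⨆ n ∈ Set.Ici (1 : ℕ), (((n : ℝ)⁻¹ : ℝ) : EReal) *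
            elog (P {ω | Mn X n ω ∈ Ak f k ε})) ≤ 0 ∧
         limsup (fun n : ℕ => (((n : ℝ)⁻¹ : ℝ) : EReal) *
            elog (P {ω | Mn X n ω ∈ Ak f k ε})) atTop =
          liminf (fun n : ℕ => (((n : ℝ)⁻¹ : ℝ) : EReal) *
            elog (P {ω | Mn X n ω ∈ Ak f k ε})) atTop)) ∧
    (∀ f : ℝ → EReal, f 0 = 1 → (∀ θ : ℝ, θ ≠ 0 → f θ = ⊤) →
      ∀ k : ℕ, 1 ≤ k →
        Tendsto (fun n : ℕ => (((n : ℝ)⁻¹ : ℝ) : EReal) *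
            elog (P {ω | Mn X n ω ∈ Vk k f})) atTop
          (nhds (⨆ n ∈ Set.Ici (1 : ℕ), (((n : ℝ)⁻¹ : ℝ) : EReal) *
            elog (P {ω | Mn X n ω ∈ Vk k f}))) ∧
        (⨆ n ∈ Set.Ici (1 : ℕ), (((n : ℝ)⁻¹ : ℝ) : EReal) *
            elog (P {ω | Mn X n ω ∈ Vk k f})) ≤ 0) := by
  refine ⟨fun f hf _ _ k hk ε _ => ?_, fun f hf0 hftop k _ =>
    tendsto_inv_mul_elog_measure_Mn_mem hmeas hid hindep
      (isConvexAmongNormalized_Vk_of_eq_top hf0 hftop k) (isOpenAmongNormalized_Vk k f)⟩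
  obtain ⟨hlim, hle⟩ := tendsto_inv_mul_elog_measure_Mn_mem hmeas hid hindep
    (isConvexAmongNormalized_Ak f hk ε) (isOpenAmongNormalized_Ak hf.1 k ε)
  exact ⟨hlim, hle, hlim.limsup_eq.trans hlim.liminf_eq.symm⟩

end
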